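/- Let α ∈ Φ and let α_i ≠ α_j be two distinct simple roots. Assume α + α_i − α_j ∈ Φ. If α + α_i ∈ Φ and α ≠ α_j, then α − α_j ∈ Φ. -/

import Mathlib

noncomputable section

variable {E : Type*} [AddCommGroup E] [Module ℚ E]

/-- The Cartan pairing `(β, α^∨) = 2(β,α)/(α,α)`. -/
def pairingB (B : E →ₗ[ℚ] E →ₗ[ℚ] ℚ) (β α : E) : ℚ := 2 * B β α / B α α

/-- A reduced crystallographic root system in a ℚ-vector space with a
positive-definite symmetric bilinear form. -/
structure IsRootSystem (B : E →ₗ[ℚ] E →ₗ[ℚ] ℚ) (Φ : Set E) : Prop where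
  finite : Φ.Finite
  ne_zero : ∀ α ∈ Φ, α ≠ 0
  symm : ∀ x y : E, B x y = B y x
  posdef : ∀ x : E, x ≠ 0 → 0 < B x x
  reduced : ∀ α ∈ Φ, ∀ t : ℚ, t • α ∈ Φ → t = 1 ∨ t = -1
  cryst : ∀ α ∈ Φ, ∀ β ∈ Φ, ∃ n : ℤ, pairingB B β α = n
  reflMem : ∀ α ∈ Φ, ∀ β ∈ Φ, β - pairingB B β α • α ∈ Φ

/-- Irreducibility: no nontrivial orthogonal decomposition of `Φ`. -/
def IsIrreducibleRS (B : E →ₗ[ℚ] E →ₗ[ℚ] ℚ) (Φ : Set E) : Prop :=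
  ∀ s : Set E, s ⊆ Φ → s.Nonempty →
    (∀ α ∈ s, ∀ β ∈ Φ, β ∉ s → B α β = 0) → Φ ⊆ s

/-- `RootChain Φ γ β p q` says that the `γ`-string through `β` is
`β - qγ, ..., β, ..., β + pγ`. -/
def RootChain (Φ : Set E) (γ β : E) (p q : ℕ) : Prop :=
  (∀ k : ℤ, -(q : ℤ) ≤ k → k ≤ (p : ℤ) → β + (k : ℚ) • γ ∈ Φ) ∧
  β - ((q : ℚ) + 1) • γ ∉ Φ ∧ β + ((p : ℚ) + 1) • γ ∉ Φ

/-- A set of simple roots `α_i = a i`, indexed by a finite set `I`. -/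
structure IsBase {I : Type*} [Fintype I] (Φ : Set E) (a : I → E) : Prop where
  mem : ∀ i, a i ∈ Φ
  indep : LinearIndependent ℚ a
  posneg : ∀ β ∈ Φ, (∃ c : I → ℕ, β = ∑ i, (c i : ℚ) • a i) ∨
    (∃ c : I → ℕ, β = -∑ i, (c i : ℚ) • a i)

/-!
If `(α, α_j) > 0` then `α - α_j` is a root, and if `(α + α_i - α_j, α_i) > 0` then subtracting
`α_i` from that root gives `α - α_j`. Otherwise, since `(α_i, α_j) ≤ 0` for distinct simple roots,
`(α, α_i) ≤ -(α_i, α_i)`, i.e. `⟨α, α_i^∨⟩ ≤ -2`; strict Cauchy–Schwarz and integrality then force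
`⟨α_i, α^∨⟩ ≥ -1`, so `(α, α + α_i - α_j) > 0` and `α_j - α_i = α - (α + α_i - α_j)` would be a
root, which is impossible in a base.
-/

theorem LinearIndependent.sub_ne_sum_natCast_smul {R M ι : Type*} [Ring R] [PartialOrder R]
    [IsStrictOrderedRing R] [AddCommGroup M] [Module R M] [Fintype ι]
    {v : ι → M} (hv : LinearIndependent R v) {i j : ι} (hij : i ≠ j) (c : ι → ℕ) :
    v i - v j ≠ ∑ k, (c k : R) • v k := by
  classical
  intro h
  have hcoeff := Fintype.linearIndependent_iffₛ.mp hv (fun k => c k + (Pi.single j 1 : ι → R) k)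
    (Pi.single i 1) (by simp [add_smul, Finset.sum_add_distrib, ← h]) j
  simp only [Pi.single_eq_same, Pi.single_eq_of_ne' hij] at hcoeff
  exact (Nat.cast_add_one_pos (c j)).ne' hcoeff

theorem pairingB_self {B : E →ₗ[ℚ] E →ₗ[ℚ] ℚ} {α : E} (h : B α α ≠ 0) : pairingB B α α = 2 := by
  rw [pairingB, mul_div_assoc, div_self h, mul_one]

namespace IsRootSystem

variable {B : E →ₗ[ℚ] E →ₗ[ℚ] ℚ} {Φ : Set E} {β γ : E}

theorem apply_self_pos (hRS : IsRootSystem B Φ) (hβ : β ∈ Φ) : 0 < B β β :=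
  hRS.posdef β (hRS.ne_zero β hβ)

theorem neg_mem (hRS : IsRootSystem B Φ) (hβ : β ∈ Φ) : -β ∈ Φ := by
  have h := hRS.reflMem β hβ β hβ
  rwa [pairingB_self (hRS.apply_self_pos hβ).ne', two_smul, sub_add_cancel_left] at h

theorem linearIndependent_pair (hRS : IsRootSystem B Φ) (hβ : β ∈ Φ) (hγ : γ ∈ Φ)
    (h₁ : β ≠ γ) (h₂ : β ≠ -γ) : LinearIndependent ℚ ![β, γ] := by
  rw [LinearIndependent.pair_symm_iff, LinearIndependent.pair_iff' (hRS.ne_zero γ hγ)]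
  rintro c rfl
  rcases hRS.reduced γ hγ c hβ with rfl | rfl
  · exact h₁ (one_smul ℚ γ)
  · exact h₂ (neg_one_smul ℚ γ)

theorem pairingB_mul_pairingB_lt_four (hRS : IsRootSystem B Φ) (hβ : β ∈ Φ) (hγ : γ ∈ Φ)
    (hind : LinearIndependent ℚ ![β, γ]) : pairingB B β γ * pairingB B γ β < 4 := by
  have hcs := (LinearMap.BilinForm.apply_mul_apply_lt_iff_linearIndependent B hRS.posdef β γ).mpr
    hind
  have hβ₀ := hRS.apply_self_pos hβ
  have hγ₀ := hRS.apply_self_pos hγ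
  rw [pairingB, pairingB, div_mul_div_comm, div_lt_iff₀ (by positivity)]
  nlinarith

theorem sub_mem_of_apply_pos (hRS : IsRootSystem B Φ) (hβ : β ∈ Φ) (hγ : γ ∈ Φ)
    (hpos : 0 < B β γ) (hne : β ≠ γ) : β - γ ∈ Φ := by
  have hβ₀ := hRS.apply_self_pos hβ
  have hγ₀ := hRS.apply_self_pos hγ
  have hneg : β ≠ -γ := by
    rintro rfl
    simp only [map_neg, LinearMap.neg_apply] at hpos
    linarith
  obtain ⟨n, hn⟩ := hRS.cryst γ hγ β hβ
  obtain ⟨m, hm⟩ := hRS.cryst β hβ γ hγ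
  have hn₁ : (0 : ℚ) < n := hn ▸ by unfold pairingB; positivity
  have hm₁ : (0 : ℚ) < m := hm ▸ by unfold pairingB; rw [hRS.symm]; positivity
  have hnm : (n * m : ℚ) < 4 := hn ▸ hm ▸ hRS.pairingB_mul_pairingB_lt_four hβ hγ
    (hRS.linearIndependent_pair hβ hγ hne hneg)
  norm_cast at hn₁ hm₁ hnm
  obtain rfl | rfl : n = 1 ∨ m = 1 := by
    by_contra! h
    nlinarith [lt_of_le_of_ne hn₁ h.1.symm, lt_of_le_of_ne hm₁ h.2.symm]
  · simpa [hn] using hRS.reflMem γ hγ β hβ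
  · simpa [hm] using hRS.neg_mem (hRS.reflMem β hβ γ hγ)

theorem neg_one_le_pairingB (hRS : IsRootSystem B Φ) (hβ : β ∈ Φ) (hγ : γ ∈ Φ)
    (hne : β ≠ -γ) (h : pairingB B β γ ≤ -2) : -1 ≤ pairingB B γ β := by
  have hne' : β ≠ γ := by
    rintro rfl
    rw [pairingB_self (hRS.apply_self_pos hβ).ne'] at h
    norm_num at h
  obtain ⟨n, hn⟩ := hRS.cryst γ hγ β hβ
  obtain ⟨m, hm⟩ := hRS.cryst β hβ γ hγ
  have hnm : (n * m : ℚ) < 4 := hn ▸ hm ▸ hRS.pairingB_mul_pairingB_lt_four hβ hγ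
    (hRS.linearIndependent_pair hβ hγ hne' hne)
  have hn₂ : n ≤ -2 := by exact_mod_cast hn ▸ h
  norm_cast at hnm
  rw [hm]
  exact_mod_cast (by nlinarith : -1 ≤ m)

end IsRootSystem

namespace IsBase

variable {I : Type*} [Fintype I] {Φ : Set E} {a : I → E} {i j : I}

theorem sub_notMem (hbase : IsBase Φ a) (hij : i ≠ j) : a i - a j ∉ Φ := by
  intro hmem
  rcases hbase.posneg _ hmem with ⟨c, hc⟩ | ⟨c, hc⟩
  · exact hbase.indep.sub_ne_sum_natCast_smul hij c hc
  · exact hbase.indep.sub_ne_sum_natCast_smul hij.symm c (by rw [← neg_sub, hc, neg_neg])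

theorem apply_nonpos {B : E →ₗ[ℚ] E →ₗ[ℚ] ℚ} (hbase : IsBase Φ a) (hRS : IsRootSystem B Φ)
    (hij : i ≠ j) : B (a i) (a j) ≤ 0 := by
  by_contra! h
  exact hbase.sub_notMem hij (hRS.sub_mem_of_apply_pos (hbase.mem i) (hbase.mem j) h
    (hbase.indep.injective.ne hij))

end IsBase

theorem sub_simple_mem
    {I : Type*} [Fintype I]
    (B : E →ₗ[ℚ] E →ₗ[ℚ] ℚ) (Φ : Set E) (hRS : IsRootSystem B Φ)
    (a : I → E) (hbase : IsBase Φ a) {i j : I} (hij : i ≠ j)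
    {α : E} (hα : α ∈ Φ) (h1 : α + a i - a j ∈ Φ)
    (h2 : α + a i ∈ Φ) (h3 : α ≠ a j) :
    α - a j ∈ Φ := by
  have hi := hbase.mem i
  by_cases hαj : 0 < B α (a j)
  · exact hRS.sub_mem_of_apply_pos hα (hbase.mem j) hαj h3
  by_cases hδi : 0 < B (α + a i - a j) (a i)
  · have hne : α + a i - a j ≠ a i := fun h => h3 (by linear_combination (norm := module) h)
    convert hRS.sub_mem_of_apply_pos h1 hi hδi hne using 1
    abel
  exfalso
  have hij₀ := hbase.apply_nonpos hRS hij
  have hi₀ := hRS.apply_self_pos hi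
  have hα₀ := hRS.apply_self_pos hα
  have hαi : pairingB B α (a i) ≤ -2 := by
    simp only [map_sub, map_add, LinearMap.sub_apply, LinearMap.add_apply] at hδi
    rw [pairingB, div_le_iff₀ hi₀]
    linarith [hRS.symm (a j) (a i)]
  have hiα := hRS.neg_one_le_pairingB hα hi (fun h => hRS.ne_zero _ h2 (by simp [h])) hαi
  rw [pairingB, le_div_iff₀ hα₀, hRS.symm (a i)] at hiα
  have hpos : 0 < B α (α + a i - a j) := by
    simp only [map_sub, map_add]
    linarith
  have hne : α ≠ α + a i - a j := fun h => hij (hbase.indep.injective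
    (by linear_combination (norm := module) -h))
  apply hbase.sub_notMem hij.symm
  convert hRS.sub_mem_of_apply_pos hα h1 hpos hne using 1
  abel
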